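/- arXiv:1706.03401 — 2 statements merged into one kernel-verified Lean document; each statement's English description precedes it below -/
import Mathlib

section
/- Let D' be a finite distributive lattice whose largest element p = 1_{D'} is join-irreducible, and let (C₀, λ₀, D') be a J(D')-labeled chain. Let C₁ be a finite chain of even length 2m with m ≥ 1, labeled by a map λ₁: Prime(C₁) → J(D') such that, counting from below, every odd-numbered edge of C₁ is labeled p (and the even-numbered edges carry arbitrary labels in J(D')). Let C = C₀ ∔ C₁ be the glued sum with the labeling λ' that extends λ₀ and λ₁. Then (C, λ', D') is a J(D')-labeled chain and srep(C, λ', D') = srep(C₀, λ₀, D'). -/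
/-- The element of `D` represented by the interval `[a,b]` of the chain `Fin (n+1)`,
whose `i`-th edge is labeled by `lab i` (the empty join being `⊥ = 0`). -/
def erep {D : Type*} [SemilatticeSup D] [OrderBot D] {n : ℕ}
    (lab : Fin n → D) (a b : Fin (n + 1)) : D :=
  Finset.univ.sup fun i : Fin n =>
    if a ≤ i.castSucc ∧ i.succ ≤ b then lab i else ⊥

/-- The subset of `D` represented by the labeled chain `Fin (n+1)`. -/
def srep {D : Type*} [SemilatticeSup D] [OrderBot D] {n : ℕ}
    (lab : Fin n → D) : Set D :=
  {x | ∃ a b : Fin (n + 1), a ≤ b ∧ x = erep lab a b}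

/-!
An interval of the glued sum lying inside `C₀` represents the same element as in `C₀`.
Any other interval is empty, a single edge of `C₁`, or contains an edge labeled `⊤`: the
edge directly above `C₀`, or one of two consecutive edges of `C₁`. So it represents `⊥`,
a join-irreducible label, or `⊤`, and each of these already occurs in `srep λ₀` because
`λ₀` hits every join-irreducible element, `⊤` included.
-/

section erep

variable {D : Type*} [SemilatticeSup D] [OrderBot D] {n : ℕ}

theorem erep_le_iff {lab : Fin n → D} {a b : Fin (n + 1)} {x : D} :
    erep lab a b ≤ x ↔ ∀ i : Fin n, (a : ℕ) ≤ i → (i : ℕ) < b → lab i ≤ x := by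
  simp only [erep, Finset.sup_le_iff, Finset.mem_univ, true_implies, Fin.le_def,
    Fin.val_castSucc, Fin.val_succ, Nat.succ_le_iff]
  refine forall_congr' fun i => ⟨fun h h₁ h₂ => ?_, fun h => ?_⟩
  · simpa [h₁, h₂] using h
  · split_ifs with hi
    exacts [h hi.1 hi.2, bot_le]

theorem le_erep (lab : Fin n → D) {a b : Fin (n + 1)} {i : Fin n}
    (ha : (a : ℕ) ≤ i) (hb : (i : ℕ) < b) : lab i ≤ erep lab a b := by
  have h := Finset.le_sup (f := fun i : Fin n =>
    if a ≤ i.castSucc ∧ i.succ ≤ b then lab i else ⊥) (Finset.mem_univ i)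
  rwa [if_pos ⟨Fin.le_def.2 ha, Fin.le_def.2 (by simpa using hb)⟩] at h

theorem erep_self (lab : Fin n → D) (a : Fin (n + 1)) : erep lab a a = ⊥ :=
  le_bot_iff.1 <| erep_le_iff.2 fun _ h₁ h₂ => absurd (h₁.trans_lt h₂) (lt_irrefl _)

theorem erep_castSucc_succ (lab : Fin n → D) (i : Fin n) :
    erep lab i.castSucc i.succ = lab i := by
  refine le_antisymm (erep_le_iff.2 fun j h₁ h₂ => ?_) (le_erep lab (by simp) (by simp))
  rw [Fin.ext (show (j : ℕ) = i by simp only [Fin.val_castSucc, Fin.val_succ] at h₁ h₂; omega)]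

theorem erep_eq_top [OrderTop D] {lab : Fin n → D} {a b : Fin (n + 1)} {i : Fin n}
    (ha : (a : ℕ) ≤ i) (hb : (i : ℕ) < b) (hi : lab i = ⊤) : erep lab a b = ⊤ :=
  top_unique (hi ▸ le_erep lab ha hb)

theorem bot_mem_srep (lab : Fin n → D) : ⊥ ∈ srep lab :=
  ⟨0, 0, le_rfl, (erep_self lab 0).symm⟩

theorem apply_mem_srep (lab : Fin n → D) (i : Fin n) : lab i ∈ srep lab :=
  ⟨_, _, Fin.castSucc_lt_succ.le, (erep_castSucc_succ lab i).symm⟩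

end erep

section extension

variable {D : Type*} [SemilatticeSup D] [OrderBot D] {n N : ℕ}
  {lab : Fin n → D} {lab' : Fin N → D}

theorem erep_eq_erep_of_extends (hext : ∀ (i : Fin N) (h : (i : ℕ) < n), lab' i = lab ⟨i, h⟩)
    {a b : Fin (N + 1)} {a' b' : Fin (n + 1)} (ha : (a : ℕ) = a') (hb : (b : ℕ) = b') :
    erep lab' a b = erep lab a' b' := by
  refine le_antisymm (erep_le_iff.2 fun i h₁ h₂ => ?_) (erep_le_iff.2 fun i h₁ h₂ => ?_)
  · have hi : (i : ℕ) < n := by omega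
    rw [hext i hi]
    exact le_erep lab (i := ⟨i, hi⟩) (by dsimp only; omega) (by dsimp only; omega)
  · have hi : (i : ℕ) < N := by omega
    rw [← hext ⟨i, hi⟩ i.isLt]
    exact le_erep lab' (i := ⟨i, hi⟩) (by dsimp only; omega) (by dsimp only; omega)

theorem erep_mem_srep_of_extends (hext : ∀ (i : Fin N) (h : (i : ℕ) < n), lab' i = lab ⟨i, h⟩)
    {a b : Fin (N + 1)} (hab : a ≤ b) (hb : (b : ℕ) ≤ n) : erep lab' a b ∈ srep lab :=
  ⟨⟨a, by omega⟩, ⟨b, by omega⟩, hab, erep_eq_erep_of_extends hext rfl rfl⟩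

theorem srep_subset_srep_of_extends (hnN : n ≤ N)
    (hext : ∀ (i : Fin N) (h : (i : ℕ) < n), lab' i = lab ⟨i, h⟩) : srep lab ⊆ srep lab' := by
  rintro _ ⟨a, b, hab, rfl⟩
  exact ⟨Fin.castLE (by omega) a, Fin.castLE (by omega) b, hab,
    (erep_eq_erep_of_extends hext rfl rfl).symm⟩

end extension

theorem exists_even_offset_mem_Ico {n a b : ℕ} (hnb : n < b) (hab : a < b)
    (h : a ≤ n ∨ a + 1 < b) : ∃ i, a ≤ i ∧ i < b ∧ n ≤ i ∧ (i - n) % 2 = 0 :=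
  ⟨if a ≤ n then n else if (a - n) % 2 = 0 then a else a + 1, by split_ifs <;> omega⟩

theorem erep_eq_bot_or_top_or_mem_range {D : Type*} [SemilatticeSup D] [BoundedOrder D]
    {N : ℕ} (lab : Fin N → D) (n : ℕ)
    (htop : ∀ i : Fin N, n ≤ (i : ℕ) → ((i : ℕ) - n) % 2 = 0 → lab i = ⊤)
    {a b : Fin (N + 1)} (hab : a ≤ b) (hnb : n < (b : ℕ)) :
    erep lab a b = ⊥ ∨ erep lab a b = ⊤ ∨ erep lab a b ∈ Set.range lab := by
  rcases eq_or_lt_of_le hab with rfl | hlt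
  · exact Or.inl (erep_self lab a)
  by_cases hsingle : n < (a : ℕ) ∧ (b : ℕ) = a + 1
  · have ha : (a : ℕ) < N := by omega
    rw [show a = Fin.castSucc ⟨a, ha⟩ from rfl,
      show b = Fin.succ ⟨a, ha⟩ from Fin.ext (by simp [hsingle.2]), erep_castSucc_succ]
    exact Or.inr (Or.inr ⟨_, rfl⟩)
  · obtain ⟨i, h₁, h₂, h₃, h₄⟩ :=
      exists_even_offset_mem_Ico hnb (Fin.lt_def.1 hlt) (by omega)
    have hi : i < N := by omega
    exact Or.inr (Or.inl (erep_eq_top (i := ⟨i, hi⟩) h₁ h₂ (htop _ h₃ h₄)))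

/-- Let `D'` be a finite distributive lattice whose top element `p = 1` is
join-irreducible, let `(Fin (n+1), lab₀, D')` be a `J(D')`-labeled chain, and let
`Fin (2m + 1)` (with `m ≥ 1`) be a chain whose edges are labeled in `J(D')` so
that, counting from below, every odd-numbered edge is labeled by `p = ⊤`. Then
the glued sum (the chain `Fin (n + 2m + 1)` with labeling `lab'` extending `lab₀`
and `lab₁`) is a `J(D')`-labeled chain and it represents the same subset of `D'`
as `(Fin (n+1), lab₀, D')`. -/
theorem gluedSum_with_interleaved_top_labels_represents_same_set
    (D' : Type) [DistribLattice D'] [BoundedOrder D']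
    (hp : SupIrred (⊤ : D'))
    (n : ℕ) (lab₀ : Fin n → D')
    (h₀J : ∀ i, SupIrred (lab₀ i))
    (h₀surj : ∀ d : D', SupIrred d → ∃ i, lab₀ i = d)
    (m : ℕ)
    (lab₁ : Fin (2 * m) → D')
    (h₁J : ∀ i, SupIrred (lab₁ i))
    (h₁odd : ∀ i : Fin (2 * m), (i : ℕ) % 2 = 0 → lab₁ i = ⊤)
    (lab' : Fin (n + 2 * m) → D')
    (hlab'₀ : ∀ (i : Fin (n + 2 * m)) (h : (i : ℕ) < n), lab' i = lab₀ ⟨i, h⟩)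
    (hlab'₁ : ∀ (i : Fin (n + 2 * m)) (h : n ≤ (i : ℕ)),
      lab' i = lab₁ ⟨(i : ℕ) - n, by have := i.isLt; omega⟩) :
    (∀ i, SupIrred (lab' i)) ∧
    (∀ d : D', SupIrred d → ∃ i, lab' i = d) ∧
    srep lab' = srep lab₀ := by
  have hJ : ∀ i, SupIrred (lab' i) := fun i => by
    by_cases hi : (i : ℕ) < n
    · exact hlab'₀ i hi ▸ h₀J _
    · exact hlab'₁ i (not_lt.1 hi) ▸ h₁J _
  have hmem : ∀ d, SupIrred d → d ∈ srep lab₀ := fun d hd => by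
    obtain ⟨i, rfl⟩ := h₀surj d hd
    exact apply_mem_srep lab₀ i
  refine ⟨hJ, fun d hd => ?_, ?_⟩
  · obtain ⟨i, rfl⟩ := h₀surj d hd
    exact ⟨⟨i, by omega⟩, hlab'₀ _ i.isLt⟩
  refine (srep_subset_srep_of_extends (by omega) hlab'₀).antisymm' ?_
  rintro _ ⟨a, b, hab, rfl⟩
  rcases le_or_gt (b : ℕ) n with hb | hb
  · exact erep_mem_srep_of_extends hlab'₀ hab hb
  rcases erep_eq_bot_or_top_or_mem_range lab' n
      (fun i hi hev => (hlab'₁ i hi).trans (h₁odd _ hev)) hab hb with h | h | ⟨i, h⟩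
  · exact h ▸ bot_mem_srep lab₀
  · exact h ▸ hmem ⊤ hp
  · exact h ▸ hmem _ (hJ i)
end

section
/- Let L be a finite lattice, D a finite distributive lattice, and γ: Prime(L) → J(D) a coloring (J(D) carrying the order of D). Let μ: J(Con(L)) → J(D) be the induced order isomorphism con(p) ↦ γ(p), and let φ: Con(L) → D be the unique lattice isomorphism extending μ. Then for every x ∈ D: x ∈ φ(Princ(L)) if and only if there exists a chain u₀ ≺ u₁ ≺ ⋯ ≺ uₙ in L (n ≥ 0) such that x = γ([u₀,u₁]) ∨ ⋯ ∨ γ([u_{n−1},u_n]) (the empty join, for n = 0, being 0). -/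
/-- A congruence of a lattice: an equivalence relation compatible with join and meet. -/
structure LatCon (L : Type*) [Lattice L] where
  r : L → L → Prop
  refl' : ∀ x, r x x
  symm' : ∀ {x y}, r x y → r y x
  trans' : ∀ {x y z}, r x y → r y z → r x z
  supCompat' : ∀ {a b c d}, r a b → r c d → r (a ⊔ c) (b ⊔ d)
  infCompat' : ∀ {a b c d}, r a b → r c d → r (a ⊓ c) (b ⊓ d)

namespace LatCon

variable {L : Type*} [Lattice L]

theorem ext' {θ ψ : LatCon L} (h : θ.r = ψ.r) : θ = ψ := by
  cases θ; cases ψ; cases h; rfl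

/-- Congruences ordered by inclusion. -/
instance : PartialOrder (LatCon L) where
  le θ ψ := ∀ ⦃x y⦄, θ.r x y → ψ.r x y
  le_refl _ _ _ h := h
  le_trans _ _ _ h h' _ _ hxy := h' (h hxy)
  le_antisymm θ ψ h h' :=
    ext' (by funext x y; exact propext ⟨fun hh => h hh, fun hh => h' hh⟩)

end LatCon

/-- `latConGen x y`: the smallest congruence collapsing `x` and `y`. -/
def latConGen {L : Type*} [Lattice L] (x y : L) : LatCon L where
  r a b := ∀ θ : LatCon L, θ.r x y → θ.r a b
  refl' a _ _ := LatCon.refl' _ a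
  symm' h θ hθ := θ.symm' (h θ hθ)
  trans' h h' θ hθ := θ.trans' (h θ hθ) (h' θ hθ)
  supCompat' h h' θ hθ := θ.supCompat' (h θ hθ) (h' θ hθ)
  infCompat' h h' θ hθ := θ.infCompat' (h θ hθ) (h' θ hθ)

/-- The set of principal congruences of a lattice. -/
def Princ (L : Type*) [Lattice L] : Set (LatCon L) :=
  {θ | ∃ x y : L, x ≤ y ∧ θ = latConGen x y}

/-- The prime intervals (covering pairs) of an ordered set. -/
def PrimeInt (L : Type*) [Preorder L] : Type _ := {p : L × L // p.1 ⋖ p.2}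

/-- The congruence generated by a prime interval. -/
def primeCon {L : Type*} [Lattice L] (p : PrimeInt L) : LatCon L :=
  latConGen p.val.1 p.val.2

/-! For `a ≤ b`, pick a maximal chain `a = u₀ ≺ ⋯ ≺ uₙ = b`. A congruence collapses `a` and `b`
iff it collapses every step `uᵢ ≺ uᵢ₊₁`: one way by transitivity, the other because
congruence blocks are convex. So `con(a, b)` is the join of the `con([uᵢ, uᵢ₊₁])`, and the order
isomorphism `φ`, which sends `con(p)` to `γ(p)`, carries it to the join of the colors. -/

namespace LatCon

variable {L : Type*} [Lattice L]

lemma r_of_le_of_le_of_le {θ : LatCon L} {a b x y : L} (h : θ.r a b)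
    (hax : a ≤ x) (hxy : x ≤ y) (hyb : y ≤ b) : θ.r x y := by
  have hx := θ.supCompat' h (θ.refl' x)
  rw [sup_eq_right.2 hax, sup_eq_left.2 (hxy.trans hyb)] at hx
  have hxy' := θ.infCompat' hx (θ.refl' y)
  rwa [inf_eq_left.2 hxy, inf_eq_right.2 hyb] at hxy'

lemma r_zero_last_of_r_succ {θ : LatCon L} {n : ℕ} {u : Fin (n + 1) → L}
    (hstep : ∀ i : Fin n, θ.r (u i.castSucc) (u i.succ)) (k : Fin (n + 1)) :
    θ.r (u 0) (u k) := by
  induction k using Fin.induction with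
  | zero => exact θ.refl' _
  | succ i hi => exact θ.trans' hi (hstep i)

end LatCon

lemma latConGen_le_iff {L : Type*} [Lattice L] {x y : L} {θ : LatCon L} :
    latConGen x y ≤ θ ↔ θ.r x y :=
  ⟨fun h => h fun _ hθ => hθ, fun h _ _ hab => hab θ h⟩

lemma exists_covBy_chain {L : Type*} [PartialOrder L] [Finite L] {a b : L} (hab : a ≤ b) :
    ∃ (n : ℕ) (u : Fin (n + 1) → L),
      u 0 = a ∧ u (Fin.last n) = b ∧ ∀ i : Fin n, u i.castSucc ⋖ u i.succ := by
  obtain ⟨v, hv0, n, hvn, hcov⟩ := exists_covBy_seq_of_wellFoundedLT_wellFoundedGT_of_le hab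
  exact ⟨n, fun i => v i, hv0, hvn, fun i => hcov i i.isLt⟩

lemma monotone_of_covBy_chain {L : Type*} [Preorder L] {n : ℕ} {u : Fin (n + 1) → L}
    (hc : ∀ i : Fin n, u i.castSucc ⋖ u i.succ) : Monotone u :=
  Fin.monotone_iff_le_succ.2 fun i => (hc i).le

/-- `con(u₀, uₙ)` is the join of the `con(uᵢ, uᵢ₊₁)`; `LatCon L` carries no lattice structure
here, so the join is described by its upper bounds. -/
lemma latConGen_chain_le_iff {L : Type*} [Lattice L] {n : ℕ} {u : Fin (n + 1) → L}
    (hc : ∀ i : Fin n, u i.castSucc ⋖ u i.succ) {θ : LatCon L} :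
    latConGen (u 0) (u (Fin.last n)) ≤ θ ↔
      ∀ i : Fin n, primeCon ⟨(u i.castSucc, u i.succ), hc i⟩ ≤ θ := by
  simp only [primeCon, latConGen_le_iff]
  refine ⟨fun h i => ?_, fun h => LatCon.r_zero_last_of_r_succ h _⟩
  have hu := monotone_of_covBy_chain hc
  exact LatCon.r_of_le_of_le_of_le h (hu (Fin.zero_le _)) (hc i).le (hu (Fin.le_last _))

lemma apply_latConGen_chain {L : Type*} [Lattice L] {D : Type*} [SemilatticeSup D] [OrderBot D]
    (γ : PrimeInt L → D) (φ : LatCon L ≃o D) (hφ : ∀ p : PrimeInt L, φ (primeCon p) = γ p)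
    {n : ℕ} {u : Fin (n + 1) → L} (hc : ∀ i : Fin n, u i.castSucc ⋖ u i.succ) :
    φ (latConGen (u 0) (u (Fin.last n))) =
      Finset.univ.sup fun i : Fin n => γ ⟨(u i.castSucc, u i.succ), hc i⟩ := by
  refine eq_of_forall_ge_iff fun t => ?_
  rw [← φ.le_symm_apply, latConGen_chain_le_iff hc, Finset.sup_le_iff]
  simp only [Finset.mem_univ, true_implies]
  exact forall_congr' fun i => φ.le_symm_apply.trans (hφ _ ▸ Iff.rfl)

theorem mem_image_princ_iff_join_of_chain_colors_general
    (L : Type) [Lattice L] [Fintype L]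
    (D : Type) [DistribLattice D] [BoundedOrder D]
    (γ : PrimeInt L → {d : D // SupIrred d})
    (φ : LatCon L ≃o D)
    (hφ : ∀ p : PrimeInt L, φ (primeCon p) = (γ p : D)) :
    ∀ x : D, x ∈ φ '' Princ L ↔
      ∃ (n : ℕ) (u : Fin (n + 1) → L) (hc : ∀ i : Fin n, u i.castSucc ⋖ u i.succ),
        x = Finset.univ.sup fun i : Fin n =>
          (γ ⟨(u i.castSucc, u i.succ), hc i⟩ : D) := by
  intro x
  constructor
  · rintro ⟨_, ⟨a, b, hab, rfl⟩, rfl⟩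
    obtain ⟨n, u, rfl, rfl, hc⟩ := exists_covBy_chain hab
    exact ⟨n, u, hc, apply_latConGen_chain (fun p => (γ p : D)) φ hφ hc⟩
  · rintro ⟨n, u, hc, rfl⟩
    exact ⟨_, ⟨u 0, u (Fin.last n), monotone_of_covBy_chain hc (Fin.zero_le _), rfl⟩,
      apply_latConGen_chain (fun p => (γ p : D)) φ hφ hc⟩

/-- Let `γ : Prime(L) → J(D)` be a coloring of the finite lattice `L`, and let
`φ : Con L → D` be the unique lattice isomorphism extending the induced order
isomorphism `μ : J(Con L) → J(D)`, `con(p) ↦ γ(p)`. Then an element `x ∈ D`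
belongs to `φ(Princ L)` iff there is a chain `u₀ ≺ u₁ ≺ ⋯ ≺ uₙ` in `L` with
`x = γ([u₀,u₁]) ⊔ ⋯ ⊔ γ([uₙ₋₁,uₙ])` (the empty join being `0`). -/
theorem mem_image_princ_iff_join_of_chain_colors
    (L : Type) [Lattice L] [Fintype L]
    (D : Type) [DistribLattice D] [Fintype D] [BoundedOrder D]
    (γ : PrimeInt L → {d : D // SupIrred d})
    (hsurj : Function.Surjective γ)
    (hcol₁ : ∀ p q : PrimeInt L, (γ q : D) ≤ (γ p : D) → primeCon q ≤ primeCon p)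
    (hcol₂ : ∀ p q : PrimeInt L, primeCon q ≤ primeCon p → (γ q : D) ≤ (γ p : D))
    (φ : LatCon L ≃o D)
    (hφ : ∀ p : PrimeInt L, φ (primeCon p) = (γ p : D)) :
    ∀ x : D, x ∈ φ '' Princ L ↔
      ∃ (n : ℕ) (u : Fin (n + 1) → L) (hc : ∀ i : Fin n, u i.castSucc ⋖ u i.succ),
        x = Finset.univ.sup fun i : Fin n =>
          (γ ⟨(u i.castSucc, u i.succ), hc i⟩ : D) :=
  mem_image_princ_iff_join_of_chain_colors_general L D γ φ hφ
end
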